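/- Let R be a commutative ring with unit, let n ≥ 2, and let A_n be the line graph with vertices u_1, …, u_n and edges e_1, …, e_{n−1}, where s(e_j) = u_j and r(e_j) = u_{j+1}. Define words α_i = a^{i−1}b for i = 1, …, n−1 and α_n = a^{n−1} in L_{2,R}. Then the assignment u_i ↦ α_i α_i* and e_j ↦ α_j α_{j+1}* extends to a unital injective *-algebra homomorphism L_R(A_n) → L_{2,R}. -/

import Mathlib

set_option synthInstance.maxHeartbeats 1000000
set_option maxHeartbeats 1000000

/-- A directed graph `E = (E⁰, E¹, r, s)`. -/
structure LeavittGraph : Type 1 where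
  V : Type
  E : Type
  src : E → V
  rng : E → V

namespace LeavittGraph

/-- Generators of the Leavitt path algebra: vertices, (real) edges and ghost edges. -/
inductive LGen (G : LeavittGraph) : Type
  | vert : G.V → LGen G
  | edge : G.E → LGen G
  | ghost : G.E → LGen G

variable (G : LeavittGraph) (R : Type) [CommRing R]

open FreeAlgebra

/-- The defining relations of the Leavitt path algebra of `G` over `R`. -/
inductive LeavittRel : FreeAlgebra R (LGen G) → FreeAlgebra R (LGen G) → Prop
  | vert_self (v : G.V) :
      LeavittRel (ι R (.vert v) * ι R (.vert v)) (ι R (.vert v))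
  | vert_ne {v w : G.V} (h : v ≠ w) :
      LeavittRel (ι R (.vert v) * ι R (.vert w)) 0
  | src_edge (e : G.E) :
      LeavittRel (ι R (.vert (G.src e)) * ι R (.edge e)) (ι R (.edge e))
  | edge_rng (e : G.E) :
      LeavittRel (ι R (.edge e) * ι R (.vert (G.rng e))) (ι R (.edge e))
  | rng_ghost (e : G.E) :
      LeavittRel (ι R (.vert (G.rng e)) * ι R (.ghost e)) (ι R (.ghost e))
  | ghost_src (e : G.E) :
      LeavittRel (ι R (.ghost e) * ι R (.vert (G.src e))) (ι R (.ghost e))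
  | ghost_edge_self (e : G.E) :
      LeavittRel (ι R (.ghost e) * ι R (.edge e)) (ι R (.vert (G.rng e)))
  | ghost_edge_ne {e f : G.E} (h : e ≠ f) :
      LeavittRel (ι R (.ghost e) * ι R (.edge f)) 0
  | cuntz_krieger (v : G.V) (h : {e : G.E | G.src e = v}.Finite)
      (hne : {e : G.E | G.src e = v}.Nonempty) :
      LeavittRel (ι R (.vert v)) (∑ e ∈ h.toFinset, ι R (.edge e) * ι R (.ghost e))

/-- The ambient unital algebra: the quotient of the free algebra by the Leavitt relations.
The Leavitt path algebra itself is the non-unital subalgebra generated by the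
generators (for graphs with finitely many vertices it is unital with unit the sum
of the vertices, but this unit differs from the unit of the ambient algebra). -/
abbrev LeavittAmbient : Type := RingQuot (LeavittRel G R)

/-- The vertex idempotents, in the ambient algebra. -/
def av (v : G.V) : LeavittAmbient G R := RingQuot.mkAlgHom R (LeavittRel G R) (ι R (.vert v))

/-- The edge elements, in the ambient algebra. -/
def ae (e : G.E) : LeavittAmbient G R := RingQuot.mkAlgHom R (LeavittRel G R) (ι R (.edge e))

/-- The ghost edge elements, in the ambient algebra. -/
def ag (e : G.E) : LeavittAmbient G R := RingQuot.mkAlgHom R (LeavittRel G R) (ι R (.ghost e))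

/-- The generating set of the Leavitt path algebra inside the ambient algebra. -/
def genSet : Set (LeavittAmbient G R) :=
  Set.range (av G R) ∪ Set.range (ae G R) ∪ Set.range (ag G R)

/-- The involution on the generators: it fixes vertices and exchanges real and ghost
edges. -/
def starGen : LGen G → LGen G
  | .vert v => .vert v
  | .edge e => .ghost e
  | .ghost e => .edge e

/-- The auxiliary algebra homomorphism from the free algebra to the opposite of the
ambient algebra, implementing the involution on the generators. -/
noncomputable def preStar : FreeAlgebra R (LGen G) →ₐ[R] (LeavittAmbient G R)ᵐᵒᵖ :=
  FreeAlgebra.lift R fun g =>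
    MulOpposite.op (RingQuot.mkAlgHom R (LeavittRel G R) (ι R (starGen G g)))

lemma preStar_ι (g : LGen G) :
    preStar G R (ι R g) =
      MulOpposite.op (RingQuot.mkAlgHom R (LeavittRel G R) (ι R (starGen G g))) := by
  rw [preStar, FreeAlgebra.lift_ι_apply]

lemma preStar_mul_ι (g h : LGen G) :
    preStar G R (ι R g * ι R h) =
      MulOpposite.op (RingQuot.mkAlgHom R (LeavittRel G R)
        (ι R (starGen G h) * ι R (starGen G g))) := by
  rw [map_mul, preStar_ι, preStar_ι, ← MulOpposite.op_mul, ← map_mul]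

lemma preStar_rel {x y : FreeAlgebra R (LGen G)} (h : LeavittRel G R x y) :
    preStar G R x = preStar G R y := by
  induction h with
  | vert_self v =>
      rw [preStar_mul_ι, preStar_ι]
      simp only [starGen]
      exact congrArg _ (RingQuot.mkAlgHom_rel R (LeavittRel.vert_self v))
  | vert_ne h =>
      rw [preStar_mul_ι, map_zero]
      simp only [starGen]
      rw [RingQuot.mkAlgHom_rel R (LeavittRel.vert_ne (Ne.symm h)), map_zero,
        MulOpposite.op_zero]
  | src_edge e =>
      rw [preStar_mul_ι, preStar_ι]
      simp only [starGen]
      exact congrArg _ (RingQuot.mkAlgHom_rel R (LeavittRel.ghost_src e))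
  | edge_rng e =>
      rw [preStar_mul_ι, preStar_ι]
      simp only [starGen]
      exact congrArg _ (RingQuot.mkAlgHom_rel R (LeavittRel.rng_ghost e))
  | rng_ghost e =>
      rw [preStar_mul_ι, preStar_ι]
      simp only [starGen]
      exact congrArg _ (RingQuot.mkAlgHom_rel R (LeavittRel.edge_rng e))
  | ghost_src e =>
      rw [preStar_mul_ι, preStar_ι]
      simp only [starGen]
      exact congrArg _ (RingQuot.mkAlgHom_rel R (LeavittRel.src_edge e))
  | ghost_edge_self e =>
      rw [preStar_mul_ι, preStar_ι]
      simp only [starGen]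
      exact congrArg _ (RingQuot.mkAlgHom_rel R (LeavittRel.ghost_edge_self e))
  | ghost_edge_ne h =>
      rw [preStar_mul_ι, map_zero]
      simp only [starGen]
      rw [RingQuot.mkAlgHom_rel R (LeavittRel.ghost_edge_ne (Ne.symm h)), map_zero,
        MulOpposite.op_zero]
  | cuntz_krieger v h hne =>
      rw [preStar_ι, map_sum]
      simp only [preStar_mul_ι, starGen]
      rw [← Finset.op_sum, ← map_sum]
      exact congrArg _ (RingQuot.mkAlgHom_rel R (LeavittRel.cuntz_krieger v h hne))

/-- The auxiliary algebra homomorphism `L → Lᵐᵒᵖ` implementing the involution on the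
ambient algebra. -/
noncomputable def starMapAux : LeavittAmbient G R →ₐ[R] (LeavittAmbient G R)ᵐᵒᵖ :=
  RingQuot.liftAlgHom R ⟨preStar G R, fun _ _ h => preStar_rel G R h⟩

lemma starMapAux_mk (x : FreeAlgebra R (LGen G)) :
    starMapAux G R (RingQuot.mkAlgHom R (LeavittRel G R) x) = preStar G R x := by
  rw [starMapAux, RingQuot.liftAlgHom_mkAlgHom_apply]

lemma starMapAux_gen (g : LGen G) :
    starMapAux G R (RingQuot.mkAlgHom R (LeavittRel G R) (ι R g)) =
      MulOpposite.op (RingQuot.mkAlgHom R (LeavittRel G R) (ι R (starGen G g))) := by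
  rw [starMapAux_mk, preStar_ι]

lemma starMapAux_starMapAux (x : LeavittAmbient G R) :
    (starMapAux G R ((starMapAux G R x).unop)).unop = x := by
  obtain ⟨y, rfl⟩ := RingQuot.mkAlgHom_surjective R (LeavittRel G R) x
  induction y using FreeAlgebra.induction with
  | grade0 r =>
      simp only [AlgHom.commutes, MulOpposite.algebraMap_apply, MulOpposite.unop_op]
  | grade1 g =>
      rw [starMapAux_gen, MulOpposite.unop_op, starMapAux_gen, MulOpposite.unop_op]
      cases g <;> rfl
  | mul x y ihx ihy =>
      rw [map_mul, map_mul, MulOpposite.unop_mul, map_mul, MulOpposite.unop_mul, ihx, ihy]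
  | add x y ihx ihy =>
      rw [map_add, map_add, MulOpposite.unop_add, map_add, MulOpposite.unop_add, ihx, ihy]

/-- The involution making the ambient algebra (and hence `L_R(E)`) a `*`-ring; it fixes
the vertices and `R`, and exchanges real and ghost edges. -/
noncomputable instance instStarRing : StarRing (LeavittAmbient G R) where
  star x := (starMapAux G R x).unop
  star_involutive x := starMapAux_starMapAux G R x
  star_mul x y := by
    show (starMapAux G R (x * y)).unop =
      (starMapAux G R y).unop * (starMapAux G R x).unop
    rw [map_mul, MulOpposite.unop_mul]
  star_add x y := by
    show (starMapAux G R (x + y)).unop =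
      (starMapAux G R x).unop + (starMapAux G R y).unop
    rw [map_add, MulOpposite.unop_add]

lemma star_def (x : LeavittAmbient G R) : star x = (starMapAux G R x).unop := rfl

@[simp] lemma star_av (v : G.V) : star (av G R v) = av G R v := by
  rw [star_def, av, starMapAux_gen, MulOpposite.unop_op]; rfl

@[simp] lemma star_ae (e : G.E) : star (ae G R e) = ag G R e := by
  rw [star_def, ae, ag, starMapAux_gen, MulOpposite.unop_op]; rfl

@[simp] lemma star_ag (e : G.E) : star (ag G R e) = ae G R e := by
  rw [star_def, ae, ag, starMapAux_gen, MulOpposite.unop_op]; rfl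

/-- The involution on the ambient algebra is `R`-linear. -/
lemma star_smul' (r : R) (x : LeavittAmbient G R) : star (r • x) = r • star x := by
  show (starMapAux G R (r • x)).unop = r • (starMapAux G R x).unop
  rw [map_smul, MulOpposite.unop_smul]

/-- The Leavitt path algebra `L_R(E)`: the non-unital `*`-subalgebra of the ambient
algebra generated by the vertices, edges and ghost edges. -/
noncomputable def LPA : NonUnitalStarSubalgebra R (LeavittAmbient G R) where
  toNonUnitalSubalgebra := NonUnitalAlgebra.adjoin R (genSet G R)
  star_mem' := by
    intro a ha
    replace ha : a ∈ NonUnitalAlgebra.adjoin R (genSet G R) := ha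
    show star a ∈ NonUnitalAlgebra.adjoin R (genSet G R)
    induction ha using NonUnitalAlgebra.adjoin_induction with
    | mem x hx =>
        apply NonUnitalAlgebra.subset_adjoin R
        rcases hx with (⟨v, rfl⟩ | ⟨e, rfl⟩) | ⟨e, rfl⟩
        · rw [star_av]; exact Or.inl (Or.inl ⟨v, rfl⟩)
        · rw [star_ae]; exact Or.inr ⟨e, rfl⟩
        · rw [star_ag]; exact Or.inl (Or.inr ⟨e, rfl⟩)
    | add x y hx hy ihx ihy => rw [star_add]; exact add_mem ihx ihy
    | zero => rw [star_zero]; exact zero_mem _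
    | mul x y hx hy ihx ihy => rw [star_mul]; exact mul_mem ihy ihx
    | smul r x hx ih => rw [star_smul']; exact SMulMemClass.smul_mem r ih

/-- The vertex idempotent `v ∈ L_R(E)`. -/
def lv (v : G.V) : LPA G R :=
  ⟨av G R v, NonUnitalAlgebra.subset_adjoin R (Or.inl (Or.inl ⟨v, rfl⟩))⟩

/-- The edge element `e ∈ L_R(E)`. -/
def le (e : G.E) : LPA G R :=
  ⟨ae G R e, NonUnitalAlgebra.subset_adjoin R (Or.inl (Or.inr ⟨e, rfl⟩))⟩

/-- The ghost edge element `e* ∈ L_R(E)`. -/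
def lg (e : G.E) : LPA G R :=
  ⟨ag G R e, NonUnitalAlgebra.subset_adjoin R (Or.inr ⟨e, rfl⟩)⟩

variable {G}

/-- `IsPathFrom G u w es` means that the list of edges `es` is a path from `u` to `w`;
for the empty list this means `u = w`. -/
def IsPathFrom : G.V → G.V → List G.E → Prop
  | u, w, [] => u = w
  | u, w, e :: es => G.src e = u ∧ IsPathFrom (G.rng e) w es

/-- `IsCycleAt G u c` means `c` is a cycle based at `u`: a path of positive
length from `u` to `u`. -/
def IsCycleAt (u : G.V) (c : List G.E) : Prop :=
  c ≠ [] ∧ IsPathFrom u u c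

/-- A path (given as a list of edges) has an exit if some edge `f` of the graph has the same
source as some edge of the path, but is distinct from it. -/
def HasExit (c : List G.E) : Prop :=
  ∃ e ∈ c, ∃ f : G.E, G.src f = G.src e ∧ f ≠ e

variable (G)

/-- Product of a nonempty list of edges in `L_R(E)`. -/
noncomputable def edgeProd : G.E → List G.E → LPA G R
  | e, [] => le G R e
  | e, f :: es => le G R e * edgeProd f es

/-- The element of `L_R(E)` associated to a path: the product of the edges,
or the vertex `u` for a trivial path at `u`. -/
noncomputable def pathElem (u : G.V) : List G.E → LPA G R
  | [] => lv G R u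
  | e :: es => edgeProd G R e es

/-- Product of the ghost edges of a nonempty list of edges, in reverse order. -/
noncomputable def ghostProd : G.E → List G.E → LPA G R
  | e, [] => lg G R e
  | e, f :: es => ghostProd f es * lg G R e

/-- The element `γ*` of `L_R(E)` associated to a path `γ`: the product of the ghost
edges in reverse order, or the vertex `u` for a trivial path at `u`. -/
noncomputable def ghostElem (u : G.V) : List G.E → LPA G R
  | [] => lv G R u
  | e :: es => ghostProd G R e es

/-- `cpow x n = x ^ (n + 1)`, the (n+1)-st power in the non-unital algebra `L_R(E)`. -/
noncomputable def cpow (x : LPA G R) : ℕ → LPA G R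
  | 0 => x
  | n + 1 => x * cpow x n

/-- For a polynomial `q(z) = Σ_{n} r_n z^n`, a vertex idempotent `p` and an element `x`,
`polyCyc G R q p x = r_0 • p + Σ_{n ≥ 1} r_n • x ^ n`.  This is the element `q(α)` when
`p` is the base vertex of a cycle `α` with `x` the corresponding element. -/
noncomputable def polyCyc (q : Polynomial R) (p x : LPA G R) : LPA G R :=
  q.sum fun n r => r • (if n = 0 then p else cpow G R x (n - 1))

end LeavittGraph

/-- The four generators `a, a*, b, b*` of the Leavitt algebra `L_{2,R}`. -/
inductive L2Gen : Type
  | a : L2Gen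
  | astar : L2Gen
  | b : L2Gen
  | bstar : L2Gen

open FreeAlgebra

/-- The defining relations of `L_{2,R}`: `a*a = b*b = 1 = aa* + bb*`. -/
inductive L2Rel (R : Type) [CommRing R] : FreeAlgebra R L2Gen → FreeAlgebra R L2Gen → Prop
  | a_adj : L2Rel R (ι R .astar * ι R .a) 1
  | b_adj : L2Rel R (ι R .bstar * ι R .b) 1
  | ck : L2Rel R (ι R .a * ι R .astar + ι R .b * ι R .bstar) 1

/-- The Leavitt algebra `L_{2,R}`: the universal unital `R`-algebra generated by
`a, a*, b, b*` subject to `a*a = b*b = 1 = aa* + bb*`. -/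
abbrev L2 (R : Type) [CommRing R] : Type := RingQuot (L2Rel R)

variable (R : Type) [CommRing R]

/-- The generator `a` of `L_{2,R}`. -/
def La : L2 R := RingQuot.mkAlgHom R (L2Rel R) (ι R .a)

/-- The generator `b` of `L_{2,R}`. -/
def Lb : L2 R := RingQuot.mkAlgHom R (L2Rel R) (ι R .b)

/-- The generator `a*` of `L_{2,R}`. -/
def Lastar : L2 R := RingQuot.mkAlgHom R (L2Rel R) (ι R .astar)

/-- The generator `b*` of `L_{2,R}`. -/
def Lbstar : L2 R := RingQuot.mkAlgHom R (L2Rel R) (ι R .bstar)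

namespace L2

/-- The involution on the generators. -/
def starGen : L2Gen → L2Gen
  | .a => .astar
  | .astar => .a
  | .b => .bstar
  | .bstar => .b

/-- The auxiliary algebra homomorphism `L_{2,R} → L_{2,R}ᵐᵒᵖ` implementing the involution. -/
noncomputable def starMapAux : L2 R →ₐ[R] (L2 R)ᵐᵒᵖ :=
  RingQuot.liftAlgHom R
    ⟨FreeAlgebra.lift R fun g =>
      MulOpposite.op (RingQuot.mkAlgHom R (L2Rel R) (ι R (starGen g))), by
      intro x y h
      induction h with
      | a_adj =>
          rw [map_one, map_mul, FreeAlgebra.lift_ι_apply, FreeAlgebra.lift_ι_apply,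
            ← MulOpposite.op_mul, ← map_mul]
          simp only [starGen]
          rw [RingQuot.mkAlgHom_rel R L2Rel.a_adj, map_one, MulOpposite.op_one]
      | b_adj =>
          rw [map_one, map_mul, FreeAlgebra.lift_ι_apply, FreeAlgebra.lift_ι_apply,
            ← MulOpposite.op_mul, ← map_mul]
          simp only [starGen]
          rw [RingQuot.mkAlgHom_rel R L2Rel.b_adj, map_one, MulOpposite.op_one]
      | ck =>
          rw [map_one, map_add, map_mul, map_mul, FreeAlgebra.lift_ι_apply,
            FreeAlgebra.lift_ι_apply, FreeAlgebra.lift_ι_apply, FreeAlgebra.lift_ι_apply,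
            ← MulOpposite.op_mul, ← MulOpposite.op_mul, ← MulOpposite.op_add,
            ← map_mul, ← map_mul, ← map_add]
          simp only [starGen]
          rw [RingQuot.mkAlgHom_rel R L2Rel.ck, map_one, MulOpposite.op_one]⟩

lemma starMapAux_mk (x : FreeAlgebra R L2Gen) :
    starMapAux R (RingQuot.mkAlgHom R (L2Rel R) x) =
      FreeAlgebra.lift R (fun g =>
        MulOpposite.op (RingQuot.mkAlgHom R (L2Rel R) (ι R (starGen g)))) x := by
  simp [starMapAux, RingQuot.liftAlgHom_mkAlgHom_apply]

lemma starMapAux_gen (g : L2Gen) :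
    starMapAux R (RingQuot.mkAlgHom R (L2Rel R) (ι R g)) =
      MulOpposite.op (RingQuot.mkAlgHom R (L2Rel R) (ι R (starGen g))) := by
  rw [starMapAux_mk, FreeAlgebra.lift_ι_apply]

lemma starMapAux_starMapAux (x : L2 R) :
    (starMapAux R ((starMapAux R x).unop)).unop = x := by
  obtain ⟨y, rfl⟩ := RingQuot.mkAlgHom_surjective R (L2Rel R) x
  induction y using FreeAlgebra.induction with
  | grade0 r =>
      simp only [AlgHom.commutes, MulOpposite.algebraMap_apply, MulOpposite.unop_op]
  | grade1 g =>
      rw [starMapAux_gen, MulOpposite.unop_op, starMapAux_gen, MulOpposite.unop_op]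
      cases g <;> rfl
  | mul x y ihx ihy =>
      rw [map_mul, map_mul, MulOpposite.unop_mul, map_mul, MulOpposite.unop_mul, ihx, ihy]
  | add x y ihx ihy =>
      rw [map_add, map_add, MulOpposite.unop_add, map_add, MulOpposite.unop_add, ihx, ihy]

/-- The involution making `L_{2,R}` a `*`-algebra; it fixes `R`, and exchanges
`a ↔ a*` and `b ↔ b*`. -/
noncomputable instance instStarRing : StarRing (L2 R) where
  star x := (starMapAux R x).unop
  star_involutive x := starMapAux_starMapAux R x
  star_mul x y := by
    show (starMapAux R (x * y)).unop = (starMapAux R y).unop * (starMapAux R x).unop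
    rw [map_mul, MulOpposite.unop_mul]
  star_add x y := by
    show (starMapAux R (x + y)).unop = (starMapAux R x).unop + (starMapAux R y).unop
    rw [map_add, MulOpposite.unop_add]

lemma star_def (x : L2 R) : star x = (starMapAux R x).unop := rfl

@[simp] lemma star_La : star (La R) = Lastar R := by
  rw [star_def, La, Lastar, starMapAux_gen, MulOpposite.unop_op]; rfl

@[simp] lemma star_Lb : star (Lb R) = Lbstar R := by
  rw [star_def, Lb, Lbstar, starMapAux_gen, MulOpposite.unop_op]; rfl

@[simp] lemma star_Lastar : star (Lastar R) = La R := by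
  rw [star_def, La, Lastar, starMapAux_gen, MulOpposite.unop_op]; rfl

@[simp] lemma star_Lbstar : star (Lbstar R) = Lb R := by
  rw [star_def, Lb, Lbstar, starMapAux_gen, MulOpposite.unop_op]; rfl

/-- The involution on `L_{2,R}` is `R`-linear. -/
lemma star_smul' (r : R) (x : L2 R) : star (r • x) = r • star x := by
  show (starMapAux R (r • x)).unop = r • (starMapAux R x).unop
  rw [map_smul, MulOpposite.unop_smul]

/-- The defining relations hold in `L_{2,R}`. -/
lemma astar_a : star (La R) * La R = 1 := by
  rw [star_La, Lastar, La, ← map_mul, RingQuot.mkAlgHom_rel R L2Rel.a_adj, map_one]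

lemma bstar_b : star (Lb R) * Lb R = 1 := by
  rw [star_Lb, Lbstar, Lb, ← map_mul, RingQuot.mkAlgHom_rel R L2Rel.b_adj, map_one]

lemma ck_rel : La R * star (La R) + Lb R * star (Lb R) = 1 := by
  rw [star_La, star_Lb, La, Lastar, Lb, Lbstar, ← map_mul, ← map_mul, ← map_add,
    RingQuot.mkAlgHom_rel R L2Rel.ck, map_one]

end L2

open LeavittGraph

/-- The line graph `A_n` with vertices `0, …, n-1` and edges `j : j → j+1`. -/
def lineGraph (n : ℕ) : LeavittGraph :=
  ⟨Fin n, Fin (n - 1),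
    fun j => ⟨j.val, by have := j.isLt; omega⟩,
    fun j => ⟨j.val + 1, by have := j.isLt; omega⟩⟩

/-- The word `α_i` of the embedding of `L_R(A_n)` into `L_{2,R}`: `α_i = a^i b` for
`i < n - 1` and `α_{n-1} = a^{n-1}` (indices from `0`). -/
noncomputable def lineWord (R : Type) [CommRing R] (n i : ℕ) : L2 R :=
  if i = n - 1 then La R ^ (n - 1) else La R ^ i * Lb R

/-!
Let `P_i = e_0 e_1 ⋯ e_{i-1}` be the path from the first vertex of `A_n` to the `i`-th one. The
Leavitt relations give `P_i* P_i = u_i` and `P_i P_j* = δ_ij u_0` (Cuntz–Krieger at the vertices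
of out-degree one), so the elements `E_ij = P_i* P_j` are matrix units spanning `L_R(A_n)`, and
`P_k (Σ c_ij E_ij) P_l* = c_kl u_0`. Dually the words satisfy `α_i* α_j = δ_ij`, so the
assignment respects the relations and `Σ α_i α_i* = 1` is the Cuntz relation iterated. If
`Σ c_ij E_ij` maps to `0`, so does `c_kl u_0`, i.e. `c_kl α_0 α_0* = 0`; multiplying by `α_0*` and
`α_0` gives `c_kl = 0` because `R → L_{2,R}` is injective, `L_{2,R}` acting on `R^ℕ ≅ R^ℕ × R^ℕ`.
-/

theorem mul_mul_mul_eq_ite_of_mul_eq_ite {A ι : Type*} [SemigroupWithZero A] [DecidableEq ι]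
    (q p : ι → A) (e : A) {i j k l : ι} (hjk : p j * q k = if j = k then e else 0)
    (hi : q i * e = q i) : q i * p j * (q k * p l) = if j = k then q i * p l else 0 := by
  rw [mul_assoc, ← mul_assoc (p j), hjk]
  split_ifs
  · rw [← mul_assoc, hi]
  · rw [zero_mul, mul_zero]

namespace L2

noncomputable def lift {A : Type*} [Ring A] [Algebra R A] (a a' b b' : A)
    (ha : a' * a = 1) (hb : b' * b = 1) (hab : a * a' + b * b' = 1) : L2 R →ₐ[R] A :=
  RingQuot.liftAlgHom R ⟨FreeAlgebra.lift R fun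
    | .a => a | .astar => a' | .b => b | .bstar => b', by
    intro x y h
    cases h <;> simpa⟩

noncomputable def liftOfEquivProd {M : Type*} [AddCommGroup M] [Module R M]
    (e : M ≃ₗ[R] M × M) : L2 R →ₐ[R] Module.End R M :=
  lift R (e.symm.toLinearMap ∘ₗ LinearMap.inl R M M) (LinearMap.fst R M M ∘ₗ e.toLinearMap)
    (e.symm.toLinearMap ∘ₗ LinearMap.inr R M M) (LinearMap.snd R M M ∘ₗ e.toLinearMap)
    (by ext; simp) (by ext; simp) (by ext x; simp [← map_add])

theorem algebraMap_injective : Function.Injective (algebraMap R (L2 R)) := by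
  let e : (ℕ → R) ≃ₗ[R] (ℕ → R) × (ℕ → R) :=
    (LinearEquiv.funCongrLeft R R Equiv.natSumNatEquivNat).trans
      (LinearEquiv.sumArrowLequivProdArrow ℕ ℕ R R)
  refine Function.Injective.of_comp (f := liftOfEquivProd R e) ?_
  rw [← AlgHom.coe_toRingHom, ← RingHom.coe_comp, AlgHom.comp_algebraMap]
  intro r s h
  simpa using congrFun (LinearMap.congr_fun h fun _ => 1) 0

theorem star_Lb_mul_La : star (Lb R) * La R = 0 := by
  have h : star (Lb R) * La R = star (Lb R) * La R + star (Lb R) * La R := calc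
    star (Lb R) * La R = star (Lb R) * (La R * star (La R) + Lb R * star (Lb R)) * La R := by
      rw [ck_rel, mul_one]
    _ = star (Lb R) * La R * (star (La R) * La R) + star (Lb R) * Lb R * (star (Lb R) * La R) := by
      noncomm_ring
    _ = _ := by rw [astar_a, bstar_b, mul_one, one_mul]
  simpa using h

theorem star_La_pow_mul_La_pow (k : ℕ) : star (La R ^ k) * La R ^ k = 1 := by
  induction k with
  | zero => simp
  | succ k ih =>
    rw [pow_succ, star_mul, mul_assoc, ← mul_assoc (star (La R ^ k)), ih, one_mul, astar_a]

theorem La_pow_mul_star_add_sum (m : ℕ) :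
    La R ^ m * star (La R ^ m) +
      ∑ i ∈ Finset.range m, La R ^ i * Lb R * star (La R ^ i * Lb R) = 1 := by
  induction m with
  | zero => simp
  | succ m ih =>
    have key : La R ^ (m + 1) * star (La R ^ (m + 1)) + La R ^ m * Lb R * star (La R ^ m * Lb R)
        = La R ^ m * star (La R ^ m) := by
      calc _ = La R ^ m * (La R * star (La R) + Lb R * star (Lb R)) * star (La R ^ m) := by
            rw [pow_succ, star_mul, star_mul]; noncomm_ring
        _ = _ := by rw [ck_rel, mul_one]
    rw [Finset.sum_range_succ, ← add_assoc, add_right_comm, key, ih]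

end L2

section lineWord

variable {R} {n : ℕ}

theorem lineWord_of_lt_pred {i : ℕ} (hi : i < n - 1) : lineWord R n i = La R ^ i * Lb R :=
  if_neg hi.ne

theorem star_lineWord_mul_self (i : ℕ) : star (lineWord R n i) * lineWord R n i = 1 := by
  unfold lineWord
  split_ifs
  · exact L2.star_La_pow_mul_La_pow R _
  · rw [star_mul, mul_assoc, ← mul_assoc (star (La R ^ i)), L2.star_La_pow_mul_La_pow, one_mul,
      L2.bstar_b]

theorem star_lineWord_mul_of_lt {i j : ℕ} (hij : i < j) (hj : j < n) :
    star (lineWord R n i) * lineWord R n j = 0 := by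
  obtain ⟨x, hx⟩ : ∃ x, lineWord R n j = La R ^ (i + 1) * x := by
    unfold lineWord
    split_ifs
    · exact ⟨_, (pow_mul_pow_sub _ (by omega)).symm⟩
    · exact ⟨La R ^ (j - (i + 1)) * Lb R, by rw [← mul_assoc, pow_mul_pow_sub _ (by omega)]⟩
  calc star (lineWord R n i) * lineWord R n j
      = star (Lb R) * (star (La R ^ i) * La R ^ i) * La R * x := by
        rw [lineWord_of_lt_pred (by omega), hx, star_mul, pow_succ]; noncomm_ring
    _ = 0 := by rw [L2.star_La_pow_mul_La_pow, mul_one, L2.star_Lb_mul_La, zero_mul]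

theorem star_lineWord_mul_lineWord {i j : ℕ} (hi : i < n) (hj : j < n) :
    star (lineWord R n i) * lineWord R n j = if i = j then 1 else 0 := by
  rcases lt_trichotomy i j with h | rfl | h
  · rw [if_neg h.ne, star_lineWord_mul_of_lt h hj]
  · rw [if_pos rfl, star_lineWord_mul_self]
  · rw [if_neg h.ne', ← star_star (lineWord R n j), ← star_mul, star_lineWord_mul_of_lt h hi,
      star_zero]

theorem lineWord_mul_star_mul_lineWord_mul_star {j k : ℕ} (hj : j < n) (hk : k < n) (i l : ℕ) :
    lineWord R n i * star (lineWord R n j) * (lineWord R n k * star (lineWord R n l)) =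
      if j = k then lineWord R n i * star (lineWord R n l) else 0 :=
  mul_mul_mul_eq_ite_of_mul_eq_ite (lineWord R n) (star ∘ lineWord R n) 1
    (star_lineWord_mul_lineWord hj hk) (mul_one _)

theorem sum_lineWord_mul_star (hn : 1 ≤ n) :
    ∑ i : Fin n, lineWord R n i * star (lineWord R n i) = 1 := by
  obtain ⟨m, rfl⟩ : ∃ m, n = m + 1 := ⟨n - 1, by omega⟩
  rw [Fin.sum_univ_castSucc, add_comm, ← L2.La_pow_mul_star_add_sum R m,
    ← Fin.sum_univ_eq_sum_range (fun i => La R ^ i * Lb R * star (La R ^ i * Lb R))]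
  simp only [Fin.val_last, Fin.val_castSucc]
  rw [lineWord, if_pos (by omega)]
  congr 1
  exact Finset.sum_congr rfl fun i _ => by rw [lineWord_of_lt_pred (by omega)]

theorem eq_zero_of_smul_lineWord_mul_star_eq_zero {c : R} {i : ℕ}
    (h : c • (lineWord R n i * star (lineWord R n i)) = 0) : c = 0 := by
  apply L2.algebraMap_injective R
  calc algebraMap R (L2 R) c
      = star (lineWord R n i) * (c • (lineWord R n i * star (lineWord R n i))) *
          lineWord R n i := by
        rw [mul_smul_comm, smul_mul_assoc, ← mul_assoc, star_lineWord_mul_self,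
          one_mul, star_lineWord_mul_self, Algebra.algebraMap_eq_smul_one]
    _ = 0 := by rw [h, mul_zero, zero_mul]

end lineWord

namespace LeavittGraph

variable {G : LeavittGraph}

theorem av_mul_av_self (v : G.V) : av G R v * av G R v = av G R v := by
  rw [av, ← map_mul, RingQuot.mkAlgHom_rel R (LeavittRel.vert_self v)]

theorem av_mul_av_of_ne {v w : G.V} (h : v ≠ w) : av G R v * av G R w = 0 := by
  rw [av, av, ← map_mul, RingQuot.mkAlgHom_rel R (LeavittRel.vert_ne h), map_zero]

theorem av_src_mul_ae (e : G.E) : av G R (G.src e) * ae G R e = ae G R e := by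
  rw [av, ae, ← map_mul, RingQuot.mkAlgHom_rel R (LeavittRel.src_edge e)]

theorem ae_mul_av_rng (e : G.E) : ae G R e * av G R (G.rng e) = ae G R e := by
  rw [av, ae, ← map_mul, RingQuot.mkAlgHom_rel R (LeavittRel.edge_rng e)]

theorem ag_mul_ae_self (e : G.E) : ag G R e * ae G R e = av G R (G.rng e) := by
  rw [av, ae, ag, ← map_mul, RingQuot.mkAlgHom_rel R (LeavittRel.ghost_edge_self e)]

theorem av_eq_sum_ae_mul_ag (v : G.V) (h : {e : G.E | G.src e = v}.Finite)
    (hne : {e : G.E | G.src e = v}.Nonempty) :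
    av G R v = ∑ e ∈ h.toFinset, ae G R e * ag G R e := by
  rw [av, RingQuot.mkAlgHom_rel R (LeavittRel.cuntz_krieger v h hne), map_sum]
  simp only [map_mul, ae, ag]

end LeavittGraph

theorem lineGraph_src_val {n : ℕ} (e : (lineGraph n).E) :
    Fin.val ((lineGraph n).src e) = Fin.val e := rfl

theorem lineGraph_rng_val {n : ℕ} (e : (lineGraph n).E) :
    Fin.val ((lineGraph n).rng e) = Fin.val e + 1 := rfl

theorem lineGraph_src_injective (n : ℕ) : Function.Injective (lineGraph n).src :=
  fun _ _ h => Fin.ext (by simpa [lineGraph] using h)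

theorem lineGraph_toFinset_src_eq {n : ℕ} {v : (lineGraph n).V}
    (h : {e : (lineGraph n).E | (lineGraph n).src e = v}.Finite) {e₀ : (lineGraph n).E}
    (he₀ : (lineGraph n).src e₀ = v) : h.toFinset = {e₀} := by
  ext e
  rw [Set.Finite.mem_toFinset, Set.mem_ofPred_eq, Finset.mem_singleton, ← he₀]
  exact (lineGraph_src_injective n).eq_iff

theorem lineGraph_av_src_eq_ae_mul_ag {n : ℕ} (e : (lineGraph n).E) :
    av (lineGraph n) R ((lineGraph n).src e) = ae (lineGraph n) R e * ag (lineGraph n) R e := by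
  have : Finite (lineGraph n).E := inferInstanceAs (Finite (Fin (n - 1)))
  rw [av_eq_sum_ae_mul_ag R _ (Set.toFinite _) ⟨e, rfl⟩,
    lineGraph_toFinset_src_eq _ rfl, Finset.sum_singleton]

section lineUnit

variable (n : ℕ)

-- Vertices and edges of `A_n` indexed by `ℕ`, with junk value `0` out of range.

noncomputable def lineVertex (i : ℕ) : LeavittAmbient (lineGraph n) R :=
  if h : i < n then av (lineGraph n) R ⟨i, h⟩ else 0

noncomputable def lineEdge (i : ℕ) : LeavittAmbient (lineGraph n) R :=
  if h : i < n - 1 then ae (lineGraph n) R ⟨i, h⟩ else 0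

noncomputable def linePath : ℕ → LeavittAmbient (lineGraph n) R
  | 0 => lineVertex R n 0
  | i + 1 => linePath i * lineEdge R n i

noncomputable def lineUnit (i j : ℕ) : LeavittAmbient (lineGraph n) R :=
  star (linePath R n i) * linePath R n j

variable {R n}

theorem lineVertex_val (v : Fin n) : lineVertex R n v = av (lineGraph n) R v :=
  dif_pos v.isLt

theorem lineEdge_val (e : Fin (n - 1)) : lineEdge R n e = ae (lineGraph n) R e :=
  dif_pos e.isLt

theorem star_lineVertex (i : ℕ) : star (lineVertex R n i) = lineVertex R n i := by
  unfold lineVertex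
  split_ifs
  · exact star_av _ _ _
  · exact star_zero _

theorem lineVertex_mul_lineVertex (i j : ℕ) :
    lineVertex R n i * lineVertex R n j = if i = j then lineVertex R n i else 0 := by
  rcases eq_or_ne i j with rfl | hij
  · rw [if_pos rfl, lineVertex]
    split_ifs
    · exact av_mul_av_self R _
    · exact mul_zero _
  · rw [if_neg hij, lineVertex, lineVertex]
    split_ifs
    · exact av_mul_av_of_ne R fun h => hij (Fin.val_eq_of_eq h)
    all_goals simp only [mul_zero, zero_mul]

theorem lineVertex_mul_lineEdge (i : ℕ) : lineVertex R n i * lineEdge R n i = lineEdge R n i := by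
  unfold lineEdge
  split_ifs with h
  · rw [lineVertex, dif_pos (by omega)]
    exact av_src_mul_ae R (G := lineGraph n) ⟨i, h⟩
  · exact mul_zero _

theorem lineEdge_mul_lineVertex_succ (i : ℕ) :
    lineEdge R n i * lineVertex R n (i + 1) = lineEdge R n i := by
  unfold lineEdge
  split_ifs with h
  · rw [lineVertex, dif_pos (by omega)]
    exact ae_mul_av_rng R (G := lineGraph n) ⟨i, h⟩
  · exact zero_mul _

theorem star_lineEdge_mul_lineEdge (i : ℕ) :
    star (lineEdge R n i) * lineEdge R n i = lineVertex R n (i + 1) := by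
  unfold lineEdge lineVertex
  split_ifs with h h' h'
  · rw [star_ae (lineGraph n) R ⟨i, h⟩]
    exact ag_mul_ae_self R (G := lineGraph n) ⟨i, h⟩
  · omega
  · omega
  · rw [star_zero, zero_mul]

theorem lineEdge_mul_star_lineEdge {i : ℕ} (h : i < n - 1) :
    lineEdge R n i * star (lineEdge R n i) = lineVertex R n i := by
  rw [lineEdge, dif_pos h, star_ae (lineGraph n) R ⟨i, h⟩, lineVertex, dif_pos (by omega)]
  exact (lineGraph_av_src_eq_ae_mul_ag R ⟨i, h⟩).symm

theorem lineVertex_zero_mul_linePath (i : ℕ) :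
    lineVertex R n 0 * linePath R n i = linePath R n i := by
  induction i with
  | zero => rw [linePath, lineVertex_mul_lineVertex, if_pos rfl]
  | succ i ih => rw [linePath, ← mul_assoc, ih]

theorem linePath_mul_lineVertex (i : ℕ) :
    linePath R n i * lineVertex R n i = linePath R n i := by
  induction i with
  | zero => rw [linePath, lineVertex_mul_lineVertex, if_pos rfl]
  | succ i _ => rw [linePath, mul_assoc, lineEdge_mul_lineVertex_succ]

theorem star_linePath_mul_linePath (i : ℕ) :
    star (linePath R n i) * linePath R n i = lineVertex R n i := by
  induction i with
  | zero => rw [linePath, star_lineVertex, lineVertex_mul_lineVertex, if_pos rfl]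
  | succ i ih =>
    calc star (linePath R n (i + 1)) * linePath R n (i + 1)
        = star (lineEdge R n i) * (star (linePath R n i) * linePath R n i) * lineEdge R n i := by
          rw [linePath, star_mul]; noncomm_ring
      _ = lineVertex R n (i + 1) := by
          rw [ih, mul_assoc, lineVertex_mul_lineEdge, star_lineEdge_mul_lineEdge]

theorem linePath_mul_star_linePath_self {i : ℕ} (hi : i < n) :
    linePath R n i * star (linePath R n i) = lineVertex R n 0 := by
  induction i with
  | zero => rw [linePath, star_lineVertex, lineVertex_mul_lineVertex, if_pos rfl]
  | succ i ih =>
    calc linePath R n (i + 1) * star (linePath R n (i + 1))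
        = linePath R n i * (lineEdge R n i * star (lineEdge R n i)) * star (linePath R n i) := by
          rw [linePath, star_mul]; noncomm_ring
      _ = lineVertex R n 0 := by
          rw [lineEdge_mul_star_lineEdge (by omega), linePath_mul_lineVertex, ih (by omega)]

theorem linePath_mul_star_linePath {i j : ℕ} (hi : i < n) :
    linePath R n i * star (linePath R n j) = if i = j then lineVertex R n 0 else 0 := by
  split_ifs with h
  · subst h; exact linePath_mul_star_linePath_self hi
  · rw [← linePath_mul_lineVertex i, ← linePath_mul_lineVertex j, star_mul, star_lineVertex,
      mul_assoc, ← mul_assoc (lineVertex R n i), lineVertex_mul_lineVertex, if_neg h, zero_mul,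
      mul_zero]

theorem lineUnit_mul_lineUnit {j : ℕ} (hj : j < n) (i k l : ℕ) :
    lineUnit R n i j * lineUnit R n k l = if j = k then lineUnit R n i l else 0 :=
  mul_mul_mul_eq_ite_of_mul_eq_ite (star ∘ linePath R n) (linePath R n) (lineVertex R n 0)
    (linePath_mul_star_linePath hj)
    (by rw [Function.comp_apply, ← star_lineVertex, ← star_mul, lineVertex_zero_mul_linePath])

theorem lineUnit_self (i : ℕ) : lineUnit R n i i = lineVertex R n i :=
  star_linePath_mul_linePath i

theorem lineUnit_succ_right (i : ℕ) : lineUnit R n i (i + 1) = lineEdge R n i := by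
  rw [lineUnit, linePath, ← mul_assoc, star_linePath_mul_linePath, lineVertex_mul_lineEdge]

theorem lineUnit_succ_left (i : ℕ) : lineUnit R n (i + 1) i = star (lineEdge R n i) := by
  rw [← lineUnit_succ_right, lineUnit, lineUnit, star_mul, star_star]

theorem linePath_mul_lineUnit_mul_star {k i : ℕ} (hk : k < n) {j l : ℕ} (hj : j < n) :
    linePath R n k * lineUnit R n i j * star (linePath R n l) =
      if k = i ∧ j = l then lineVertex R n 0 else 0 := by
  rw [lineUnit, ← mul_assoc, mul_assoc _ (linePath R n j), linePath_mul_star_linePath hk,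
    linePath_mul_star_linePath hj]
  split_ifs <;> simp_all [lineVertex_mul_lineVertex]

end lineUnit

section lineEmbedding

variable (n : ℕ)

noncomputable def lineUnitSpan : Submodule R (LeavittAmbient (lineGraph n) R) :=
  Submodule.span R (Set.range fun p : Fin n × Fin n => lineUnit R n p.1 p.2)

noncomputable def lineGen : LGen (lineGraph n) → L2 R
  | .vert v => lineWord R n (Fin.val v) * star (lineWord R n (Fin.val v))
  | .edge e => lineWord R n (Fin.val e) * star (lineWord R n (Fin.val e + 1))
  | .ghost e => lineWord R n (Fin.val e + 1) * star (lineWord R n (Fin.val e))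

variable {R n}

theorem lineUnitSpan_mul_le : lineUnitSpan R n * lineUnitSpan R n ≤ lineUnitSpan R n := by
  rw [lineUnitSpan, Submodule.span_mul_span, Submodule.span_le]
  rintro _ ⟨_, ⟨p, rfl⟩, _, ⟨q, rfl⟩, rfl⟩
  dsimp only
  rw [lineUnit_mul_lineUnit p.2.isLt]
  split_ifs
  · exact Submodule.subset_span ⟨(p.1, q.2), rfl⟩
  · exact zero_mem _

theorem mem_lineUnitSpan_of_mem_LPA {x : LeavittAmbient (lineGraph n) R}
    (hx : x ∈ LPA (lineGraph n) R) : x ∈ lineUnitSpan R n := by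
  let S := (lineUnitSpan R n).toNonUnitalSubalgebra fun _ _ hx hy =>
    lineUnitSpan_mul_le (Submodule.mul_mem_mul hx hy)
  have hgen : genSet (lineGraph n) R ⊆ S := by
    rintro _ ((⟨v, rfl⟩ | ⟨⟨i, hi⟩, rfl⟩) | ⟨⟨i, hi⟩, rfl⟩)
    · exact Submodule.subset_span ⟨(v, v), (lineUnit_self _).trans (lineVertex_val v)⟩
    · exact Submodule.subset_span ⟨(⟨i, by omega⟩, ⟨i + 1, by omega⟩),
        (lineUnit_succ_right i).trans (lineEdge_val ⟨i, hi⟩)⟩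
    · refine Submodule.subset_span ⟨(⟨i + 1, by omega⟩, ⟨i, by omega⟩), ?_⟩
      rw [← star_ae (lineGraph n) R ⟨i, hi⟩, ← lineEdge_val ⟨i, hi⟩]
      exact lineUnit_succ_left i
  exact NonUnitalAlgebra.adjoin_le hgen hx

theorem lift_lineGen_rel ⦃x y : FreeAlgebra R (LGen (lineGraph n))⦄
    (h : LeavittRel (lineGraph n) R x y) :
    FreeAlgebra.lift R (lineGen R n) x = FreeAlgebra.lift R (lineGen R n) y := by
  cases h with
  | cuntz_krieger v hfin hne =>
    obtain ⟨e, he⟩ := hne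
    rw [lineGraph_toFinset_src_eq hfin he, Finset.sum_singleton, ← he]
    simp only [map_mul, FreeAlgebra.lift_ι_apply, lineGen, lineGraph_src_val]
    rw [lineWord_mul_star_mul_lineWord_mul_star (by omega) (by omega), if_pos rfl]
  | vert_ne h | ghost_edge_ne h =>
    simp only [map_mul, map_zero, FreeAlgebra.lift_ι_apply, lineGen]
    rw [lineWord_mul_star_mul_lineWord_mul_star (by omega) (by omega),
      if_neg (Fin.val_injective.ne h)]
  | _ =>
    simp only [map_mul, FreeAlgebra.lift_ι_apply, lineGen, lineGraph_src_val, lineGraph_rng_val]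
    rw [lineWord_mul_star_mul_lineWord_mul_star (by omega) (by omega), if_pos rfl]

variable (R n) in
noncomputable def lineToL2 : LeavittAmbient (lineGraph n) R →ₐ[R] L2 R :=
  RingQuot.liftAlgHom R ⟨FreeAlgebra.lift R (lineGen R n), lift_lineGen_rel⟩

theorem lineToL2_mk_ι (g : LGen (lineGraph n)) :
    lineToL2 R n (RingQuot.mkAlgHom R (LeavittRel (lineGraph n) R) (ι R g)) = lineGen R n g := by
  rw [lineToL2, RingQuot.liftAlgHom_mkAlgHom_apply, FreeAlgebra.lift_ι_apply]

theorem lineToL2_av (v : (lineGraph n).V) :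
    lineToL2 R n (av (lineGraph n) R v) =
      lineWord R n (Fin.val v) * star (lineWord R n (Fin.val v)) :=
  lineToL2_mk_ι _

theorem lineToL2_ae (e : (lineGraph n).E) :
    lineToL2 R n (ae (lineGraph n) R e) =
      lineWord R n (Fin.val e) * star (lineWord R n (Fin.val e + 1)) :=
  lineToL2_mk_ι _

theorem lineToL2_star (x : LeavittAmbient (lineGraph n) R) :
    lineToL2 R n (star x) = star (lineToL2 R n x) := by
  have h : (AlgHom.op (lineToL2 R n)).comp (starMapAux (lineGraph n) R) =
      (L2.starMapAux R).comp (lineToL2 R n) := by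
    -- both sides are algebra maps into `(L2 R)ᵐᵒᵖ`: compare them on generators
    apply RingQuot.ringQuot_ext'
    apply FreeAlgebra.hom_ext
    funext g
    simp only [Function.comp_apply, AlgHom.comp_apply, starMapAux_gen]
    rw [← MulOpposite.op_unop (L2.starMapAux R _), ← L2.star_def, AlgHom.op_apply_apply]
    congr 1
    rw [MulOpposite.unop_op, lineToL2_mk_ι, lineToL2_mk_ι]
    cases g <;> simp only [starGen, lineGen, star_mul, star_star]
  exact congrArg MulOpposite.unop (AlgHom.congr_fun h x)

theorem lineToL2_lineVertex {i : ℕ} (hi : i < n) :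
    lineToL2 R n (lineVertex R n i) = lineWord R n i * star (lineWord R n i) := by
  rw [lineVertex, dif_pos hi]
  exact lineToL2_av _

theorem linePath_mul_sum_mul_star (c : Fin n × Fin n → R) (p : Fin n × Fin n) :
    linePath R n p.1 * (∑ q, c q • lineUnit R n q.1 q.2) * star (linePath R n p.2) =
      c p • lineVertex R n 0 := by
  simp only [Finset.mul_sum, Finset.sum_mul, mul_smul_comm, smul_mul_assoc,
    linePath_mul_lineUnit_mul_star p.1.isLt (Fin.isLt _)]
  simp only [Fin.val_inj, smul_ite, smul_zero]
  rw [Finset.sum_eq_single p (fun q _ hq => if_neg fun h => hq (Prod.ext h.1.symm h.2))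
    (by simp), if_pos ⟨rfl, rfl⟩]

theorem eq_zero_of_mem_LPA_of_lineToL2_eq_zero {x : LeavittAmbient (lineGraph n) R}
    (hx : x ∈ LPA (lineGraph n) R) (h0 : lineToL2 R n x = 0) : x = 0 := by
  obtain ⟨c, rfl⟩ :=
    (Submodule.mem_span_range_iff_exists_fun R).mp (mem_lineUnitSpan_of_mem_LPA hx)
  have hc (p : Fin n × Fin n) : c p = 0 := by
    apply eq_zero_of_smul_lineWord_mul_star_eq_zero (n := n) (i := 0)
    have := congrArg (lineToL2 R n) (linePath_mul_sum_mul_star c p)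
    rwa [map_mul, map_mul, h0, mul_zero, zero_mul, map_smul, lineToL2_lineVertex p.1.pos,
      eq_comm] at this
  simp [hc]

end lineEmbedding

/-- The assignment `u_i ↦ α_i α_i*`, `e_j ↦ α_j α_{j+1}*` extends to a unital injective
`*`-algebra homomorphism `L_R(A_n) → L_{2,R}`. -/
theorem line_graph_embeds_into_l2
    (R : Type) [CommRing R] (n : ℕ) (hn : 2 ≤ n) :
    ∃ φ : LPA (lineGraph n) R →⋆ₙₐ[R] L2 R,
      (∀ i : Fin n, φ (lv (lineGraph n) R i) =
        lineWord R n i * star (lineWord R n i)) ∧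
      (∀ j : Fin (n - 1), φ (le (lineGraph n) R j) =
        lineWord R n j * star (lineWord R n (j + 1))) ∧
      φ (∑ i : Fin n, lv (lineGraph n) R i) = 1 ∧
      Function.Injective φ := by
  let Φ : LeavittAmbient (lineGraph n) R →⋆ₐ[R] L2 R :=
    { lineToL2 R n with map_star' := lineToL2_star }
  refine ⟨Φ.toNonUnitalStarAlgHom.comp (NonUnitalStarSubalgebraClass.subtype _),
    fun i => lineToL2_av i, fun j => lineToL2_ae j, ?_, ?_⟩
  · exact (map_sum _ _ _).trans <| (Finset.sum_congr rfl fun i _ => lineToL2_av i).trans <|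
      sum_lineWord_mul_star (by omega)
  · rw [injective_iff_map_eq_zero]
    exact fun x hx => Subtype.ext (eq_zero_of_mem_LPA_of_lineToL2_eq_zero x.2 hx)
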